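/- If f : Σⁿ → P(B) is a (1,2)-sensitive bucketing function, then |B| ≥ n·|Σ|^{n-1}. -/

import Mathlib

namespace Levenshtein

structure Cost (α β δ : Type*) where
  delete : α → δ
  insert : β → δ
  substitute : α → β → δ

def defaultCost {α : Type*} [DecidableEq α] : Cost α α ℕ where
  delete _ := 1
  insert _ := 1
  substitute a b := if a = b then 0 else 1

def impl {α β δ : Type*} [AddZeroClass δ] [Min δ]
    (C : Cost α β δ)
    (xs : List α) (y : β) (d : {r : List δ // 0 < r.length}) : {r : List δ // 0 < r.length} :=
  let ⟨ds, w⟩ := d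
  xs.zip (ds.zip ds.tail) |>.foldr
    (init := ⟨[C.insert y + ds.getLast (List.length_pos_iff.mp w)], by simp⟩)
    (fun ⟨x, d₀, d₁⟩ ⟨r, w⟩ =>
      ⟨min (C.delete x + r[0]) (min (C.insert y + d₀) (C.substitute x y + d₁)) :: r, by simp⟩)

end Levenshtein

def suffixLevenshtein {α β δ : Type*} [AddZeroClass δ] [Min δ] (C : Levenshtein.Cost α β δ)
    (xs : List α) (ys : List β) : {r : List δ // 0 < r.length} :=
  ys.foldr
    (Levenshtein.impl C xs)
    (xs.foldr (init := ⟨[0], by simp⟩) (fun a ⟨r, w⟩ => ⟨(C.delete a + r[0]) :: r, by simp⟩))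

def levenshtein {α β δ : Type*} [AddZeroClass δ] [Min δ] (C : Levenshtein.Cost α β δ)
    (xs : List α) (ys : List β) : δ :=
  let ⟨r, w⟩ := suffixLevenshtein C xs ys
  r[0]

/-- Edit (Levenshtein) distance between two length-`n` sequences over `α`. -/
def editDist {α : Type*} [DecidableEq α] {n : ℕ} (s t : Fin n → α) : ℕ :=
  levenshtein Levenshtein.defaultCost (List.ofFn s) (List.ofFn t)

/-- `f` is a `(d₁, d₂)`-sensitive bucketing function. -/
def IsSensitive {α B : Type*} [DecidableEq α] {n : ℕ} (d₁ d₂ : ℕ)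
    (f : (Fin n → α) → Set B) : Prop :=
  (∀ s t : Fin n → α, editDist s t ≤ d₁ → (f s ∩ f t).Nonempty) ∧
  (∀ s t : Fin n → α, d₂ ≤ editDist s t → f s ∩ f t = ∅)

/-!
A word and the word obtained from it by changing one letter are at edit distance at most `1`,
so they share a bucket. Fix letters `a ≠ b`; for each position `i` and each `g ∈ Σⁿ⁻¹`, pick a
bucket shared by the two words obtained by inserting `a`, resp. `b`, into `g` at position `i`.
Two words sharing a bucket are at edit distance at most `1`, which for words of equal length
means Hamming distance at most `1`. A word within Hamming distance `1` of both of these words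
agrees with `g` off position `i`, so the bucket determines `(i, g)`: there are at least
`n · |Σ|ⁿ⁻¹` buckets.
-/

open Levenshtein

namespace Levenshtein

variable {α β δ : Type*} [AddZeroClass δ] [Min δ] (C : Cost α β δ)

theorem impl_cons {xs : List α} {y : β} {x : α} {d : δ} {ds : List δ} {w}
    (w' : 0 < ds.length) :
    impl C (x :: xs) y ⟨d :: ds, w⟩ =
      let ⟨r, w⟩ := impl C xs y ⟨ds, w'⟩
      ⟨min (C.delete x + r[0]) (min (C.insert y + d) (C.substitute x y + ds[0])) :: r, by simp⟩ :=
  match ds, w' with | _ :: _, _ => rfl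

theorem impl_cons_fst_zero {xs : List α} {y : β} {x : α} {d : δ} {ds : List δ} {w} (h)
    (w' : 0 < ds.length) :
    (impl C (x :: xs) y ⟨d :: ds, w⟩).1[0]'h =
      let ⟨r, w⟩ := impl C xs y ⟨ds, w'⟩
      min (C.delete x + r[0]) (min (C.insert y + d) (C.substitute x y + ds[0])) :=
  match ds, w' with | _ :: _, _ => rfl

theorem impl_length {xs : List α} {y : β} (d : {r : List δ // 0 < r.length})
    (w : d.1.length = xs.length + 1) :
    (impl C xs y d).1.length = xs.length + 1 := by
  induction xs generalizing d with
  | nil => rfl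
  | cons x xs ih =>
    match d, w with
    | ⟨d₁ :: d₂ :: ds, _⟩, w =>
      dsimp [impl]
      congr 1
      exact ih ⟨d₂ :: ds, by simp⟩ (by simpa using w)

end Levenshtein

section Recurrence

variable {α β δ : Type*} [AddZeroClass δ] [Min δ] (C : Cost α β δ)

theorem suffixLevenshtein_length (xs : List α) (ys : List β) :
    (suffixLevenshtein C xs ys).1.length = xs.length + 1 := by
  induction ys with
  | nil =>
    induction xs with
    | nil => rfl
    | cons _ xs ih => simpa [suffixLevenshtein] using ih
  | cons y ys ih => exact impl_length C _ ih

theorem suffixLevenshtein_cons₁ (x : α) (xs : List α) (ys : List β) :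
    suffixLevenshtein C (x :: xs) ys =
      ⟨levenshtein C (x :: xs) ys :: (suffixLevenshtein C xs ys).1, by simp⟩ := by
  induction ys with
  | nil => rfl
  | cons y ys ih =>
    apply Subtype.ext
    rw [← List.cons_head_tail (List.ne_nil_of_length_pos (suffixLevenshtein C _ (y :: ys)).2)]
    congr 1
    · exact List.head_eq_getElem _
    · change (impl C (x :: xs) y (suffixLevenshtein C (x :: xs) ys)).1.tail =
        (impl C xs y (suffixLevenshtein C xs ys)).1
      rw [ih, impl_cons C (by simp [suffixLevenshtein_length])]
      rfl

@[simp] theorem levenshtein_nil_nil : levenshtein C [] [] = 0 := rfl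

theorem levenshtein_nil_cons (y : β) (ys : List β) :
    levenshtein C [] (y :: ys) = C.insert y + levenshtein C [] ys := by
  have key : ∀ s : {r : List δ // 0 < r.length}, s.1.length = 1 →
      (impl C [] y s).1[0]'(by simp [impl]) = C.insert y + s.1[0]'s.2 := by
    rintro ⟨_ | ⟨a, _ | ⟨b, l⟩⟩, w⟩ h <;> simp_all [impl]
  exact key _ (suffixLevenshtein_length C [] ys)

theorem levenshtein_cons_nil (x : α) (xs : List α) :
    levenshtein C (x :: xs) [] = C.delete x + levenshtein C xs [] :=
  rfl

theorem levenshtein_cons_cons (x : α) (xs : List α) (y : β) (ys : List β) :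
    levenshtein C (x :: xs) (y :: ys) =
      min (C.delete x + levenshtein C xs (y :: ys))
        (min (C.insert y + levenshtein C (x :: xs) ys)
          (C.substitute x y + levenshtein C xs ys)) := by
  change (impl C (x :: xs) y (suffixLevenshtein C (x :: xs) ys)).1[0]'_ = _
  simp only [suffixLevenshtein_cons₁]
  rw [impl_cons_fst_zero]
  rfl

end Recurrence

section DefaultCost

variable {α : Type*} [DecidableEq α]

@[simp] theorem defaultCost_delete (a : α) : (defaultCost : Cost α α ℕ).delete a = 1 := rfl

@[simp] theorem defaultCost_insert (a : α) : (defaultCost : Cost α α ℕ).insert a = 1 := rfl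

@[simp] theorem defaultCost_substitute (a b : α) :
    (defaultCost : Cost α α ℕ).substitute a b = if a = b then 0 else 1 := rfl

theorem levenshtein_defaultCost_self (xs : List α) : levenshtein defaultCost xs xs = 0 := by
  induction xs with
  | nil => rfl
  | cons a xs ih =>
    rw [levenshtein_cons_cons, defaultCost_substitute, if_pos rfl, ih]
    omega

theorem eq_of_levenshtein_defaultCost_eq_zero :
    ∀ {xs ys : List α}, levenshtein defaultCost xs ys = 0 → xs = ys
  | [], [], _ => rfl
  | [], _ :: _, h => by simp [levenshtein_nil_cons] at h
  | _ :: _, [], h => by simp [levenshtein_cons_nil] at h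
  | a :: xs, b :: ys, h => by
    simp only [levenshtein_cons_cons, defaultCost_delete, defaultCost_insert,
      defaultCost_substitute] at h
    split_ifs at h with hab
    · rw [hab, eq_of_levenshtein_defaultCost_eq_zero (xs := xs) (ys := ys) (by omega)]
    · omega

theorem levenshtein_defaultCost_eq_zero_iff {xs ys : List α} :
    levenshtein defaultCost xs ys = 0 ↔ xs = ys :=
  ⟨eq_of_levenshtein_defaultCost_eq_zero, fun h => h ▸ levenshtein_defaultCost_self xs⟩

-- Between words of equal length, a deletion forces an insertion and vice versa.
theorem levenshtein_defaultCost_cons_cons_le_one_iff {a b : α} {xs ys : List α}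
    (h : xs.length = ys.length) :
    levenshtein defaultCost (a :: xs) (b :: ys) ≤ 1 ↔
      (if a = b then 0 else 1) + levenshtein defaultCost xs ys ≤ 1 := by
  have hdelete : levenshtein defaultCost xs (b :: ys) ≠ 0 := fun h0 => by
    simpa [h] using congrArg List.length (eq_of_levenshtein_defaultCost_eq_zero h0)
  have hinsert : levenshtein defaultCost (a :: xs) ys ≠ 0 := fun h0 => by
    simpa [h] using congrArg List.length (eq_of_levenshtein_defaultCost_eq_zero h0)
  rw [levenshtein_cons_cons, defaultCost_delete, defaultCost_insert, defaultCost_substitute]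
  omega

end DefaultCost

section Hamming

variable {α : Type*} [DecidableEq α]

theorem hammingDist_cons_cons {n : ℕ} (a b : α) (s t : Fin n → α) :
    hammingDist (Fin.cons a s : Fin (n + 1) → α) (Fin.cons b t) =
      (if a = b then 0 else 1) + hammingDist s t := by
  simp only [hammingDist, Finset.card_filter, Fin.sum_univ_succ, Fin.cons_zero, Fin.cons_succ]
  split_ifs <;> simp_all

theorem editDist_cons_cons_le_one_iff {n : ℕ} (a b : α) (s t : Fin n → α) :
    editDist (Fin.cons a s : Fin (n + 1) → α) (Fin.cons b t) ≤ 1 ↔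
      (if a = b then 0 else 1) + editDist s t ≤ 1 := by
  simp only [editDist, List.ofFn_succ, Fin.cons_zero, Fin.cons_succ]
  exact levenshtein_defaultCost_cons_cons_le_one_iff (by simp)

theorem editDist_eq_zero_iff {n : ℕ} {s t : Fin n → α} : editDist s t = 0 ↔ s = t := by
  rw [editDist, levenshtein_defaultCost_eq_zero_iff, List.ofFn_inj]

theorem editDist_le_one_iff_hammingDist_le_one :
    ∀ {n : ℕ} {s t : Fin n → α}, editDist s t ≤ 1 ↔ hammingDist s t ≤ 1
  | 0, s, t => by simp [editDist, hammingDist]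
  | n + 1, s, t => by
    rw [← Fin.cons_self_tail s, ← Fin.cons_self_tail t, hammingDist_cons_cons,
      editDist_cons_cons_le_one_iff]
    split_ifs
    · simpa only [zero_add] using editDist_le_one_iff_hammingDist_le_one
    · have := (editDist_eq_zero_iff (s := Fin.tail s) (t := Fin.tail t)).trans
        hammingDist_eq_zero.symm
      omega

end Hamming

section Lines

variable {α : Type*} {n : ℕ}

theorem eq_of_insertNth_eq_insertNth {a b x y : α} (hab : a ≠ b) {i i' : Fin (n + 1)}
    {g g' : Fin n → α} (ha : (i'.insertNth a g' : Fin (n + 1) → α) = i.insertNth x g)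
    (hb : (i'.insertNth b g' : Fin (n + 1) → α) = i.insertNth y g) : i' = i ∧ g' = g := by
  obtain rfl : i' = i := by
    by_contra hne
    obtain ⟨k, rfl⟩ := Fin.exists_succAbove_eq hne
    have hak := congrFun ha (i.succAbove k)
    have hbk := congrFun hb (i.succAbove k)
    simp only [Fin.insertNth_apply_same, Fin.insertNth_apply_succAbove] at hak hbk
    exact hab (hak.trans hbk.symm)
  exact ⟨rfl, (Fin.insertNth_inj.1 ha).2⟩

variable [DecidableEq α]

theorem eq_of_hammingDist_le_one {ι : Type*} [Fintype ι] {x y : ι → α} {i j : ι}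
    (h : hammingDist x y ≤ 1) (hi : x i ≠ y i) (hji : j ≠ i) : x j = y j := by
  by_contra hj
  exact hji (Finset.card_le_one.1 h j (by simpa using hj) i (by simpa using hi))

theorem hammingDist_le_one_of_forall_ne {ι : Type*} [Fintype ι] {x y : ι → α} (i : ι)
    (h : ∀ j, j ≠ i → x j = y j) : hammingDist x y ≤ 1 := by
  have hdiff : ∀ j ∈ Finset.univ.filter fun j => x j ≠ y j, j = i := fun j hj => by
    by_contra hji
    exact (Finset.mem_filter.1 hj).2 (h j hji)
  exact Finset.card_le_one.2 fun j hj k hk => (hdiff j hj).trans (hdiff k hk).symm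

theorem hammingDist_insertNth_le_one (i : Fin (n + 1)) (a b : α) (g : Fin n → α) :
    hammingDist (i.insertNth a g : Fin (n + 1) → α) (i.insertNth b g) ≤ 1 :=
  hammingDist_le_one_of_forall_ne i fun j hji => by
    obtain ⟨k, rfl⟩ := Fin.exists_succAbove_eq hji
    simp

theorem exists_eq_insertNth_of_hammingDist_le_one {a b : α} (hab : a ≠ b) {i : Fin (n + 1)}
    {g : Fin n → α} {u : Fin (n + 1) → α} (ha : hammingDist u (i.insertNth a g) ≤ 1)
    (hb : hammingDist u (i.insertNth b g) ≤ 1) : ∃ x, u = i.insertNth x g := by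
  refine ⟨u i, Fin.eq_insertNth_iff.2 ⟨rfl, funext fun k => ?_⟩⟩
  change u (i.succAbove k) = g k
  by_contra hk
  have hne : i.succAbove k ≠ i := Fin.succAbove_ne i k
  have hua : u i = a := by
    simpa using eq_of_hammingDist_le_one ha (i := i.succAbove k) (by simpa using hk) hne.symm
  exact hk (by simpa using eq_of_hammingDist_le_one hb (by simp [hua, hab]) hne)

end Lines

namespace IsSensitive

variable {α B : Type*} [DecidableEq α] {n : ℕ} {f : (Fin n → α) → Set B}

theorem hammingDist_le_one_of_mem (hf : IsSensitive 1 2 f) {s t : Fin n → α} {c : B}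
    (hs : c ∈ f s) (ht : c ∈ f t) : hammingDist s t ≤ 1 := by
  rw [← editDist_le_one_iff_hammingDist_le_one]
  by_contra h
  exact Set.eq_empty_iff_forall_notMem.1 (hf.2 s t (by omega)) c ⟨hs, ht⟩

theorem inter_nonempty_of_hammingDist_le_one (hf : IsSensitive 1 2 f) {s t : Fin n → α}
    (h : hammingDist s t ≤ 1) : (f s ∩ f t).Nonempty :=
  hf.1 s t (editDist_le_one_iff_hammingDist_le_one.2 h)

theorem injective_of_mem_inter {f : (Fin (n + 1) → α) → Set B} (hf : IsSensitive 1 2 f)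
    {a b : α} (hab : a ≠ b) {F : Fin (n + 1) × (Fin n → α) → B}
    (hF : ∀ p, F p ∈ f (p.1.insertNth a p.2) ∩ f (p.1.insertNth b p.2)) :
    Function.Injective F := by
  rintro ⟨i, g⟩ ⟨i', g'⟩ hFeq
  have hline : ∀ u, F (i, g) ∈ f u → ∃ x, u = i.insertNth x g := fun u hu =>
    exists_eq_insertNth_of_hammingDist_le_one hab (hf.hammingDist_le_one_of_mem hu (hF (i, g)).1)
      (hf.hammingDist_le_one_of_mem hu (hF (i, g)).2)
  obtain ⟨x, hx⟩ := hline _ (hFeq ▸ (hF (i', g')).1)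
  obtain ⟨y, hy⟩ := hline _ (hFeq ▸ (hF (i', g')).2)
  obtain ⟨rfl, rfl⟩ := eq_of_insertNth_eq_insertNth hab hx hy
  rfl

end IsSensitive

theorem stmt4_general {α B : Type*} [Fintype α] [DecidableEq α] [Fintype B]
    (hα : 1 < Fintype.card α) {n : ℕ}
    (f : (Fin n → α) → Set B) (hf : IsSensitive 1 2 f) :
    n * Fintype.card α ^ (n - 1) ≤ Fintype.card B := by
  obtain ⟨a, b, hab⟩ := Fintype.exists_pair_of_one_lt_card hα
  cases n with
  | zero => simp
  | succ n =>
    choose F hF using fun p : Fin (n + 1) × (Fin n → α) =>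
      hf.inter_nonempty_of_hammingDist_le_one (hammingDist_insertNth_le_one p.1 a b p.2)
    simpa [Fintype.card_prod, Fintype.card_fun, mul_comm] using
      Fintype.card_le_of_injective F (hf.injective_of_mem_inter hab hF)

theorem stmt4 {α B : Type*} [Fintype α] [DecidableEq α] [Fintype B]
    (hα : 1 < Fintype.card α) {n : ℕ}
    (f : (Fin n → α) → Set B) (hf : IsSensitive 1 2 f)
    (hused : ∀ b : B, ∃ s : Fin n → α, b ∈ f s) :
    n * Fintype.card α ^ (n - 1) ≤ Fintype.card B :=
  stmt4_general hα f hf
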